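/- (Gate teleportation identity.) Let U : Matrix (Fin 2) (Fin 2) ℂ be unitary, let X := !![0,1;1,0] and Z := !![1,0;0,−1] be the Pauli matrices, let Φ₀₀ : Fin 2 × Fin 2 → ℂ be the EPR state Φ₀₀ (i,j) = (if i = j then (1 : ℂ)/Real.sqrt 2 else 0), and for a b : Fin 2 define the U-rotated Bell state Φ(U)_{ab} := (Uᴴ * Z^(b.val) * X^(a.val) ⊗ 1) applied to Φ₀₀ (a vector in ℂ^2 ⊗ ℂ^2, i.e., a function Fin 2 × Fin 2 → ℂ, with ⊗ the Kronecker product). Then for every α : Fin 2 → ℂ, the three-qubit state α ⊗ Φ₀₀ (as a function on Fin 2 × (Fin 2 × Fin 2)) equals (1/2) * ∑_{a b : Fin 2} Φ(U)_{ab} ⊗ (X^(a.val) * Z^(b.val) * U applied to α), where the first two tensor factors carry Φ(U)_{ab} and the last carries X^a Z^b U α. -/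

import Mathlib

open Matrix Kronecker

noncomputable def pauliX : Matrix (Fin 2) (Fin 2) ℂ := !![0, 1; 1, 0]

noncomputable def pauliZ : Matrix (Fin 2) (Fin 2) ℂ := !![1, 0; 0, -1]

/-- The EPR state `(|00⟩ + |11⟩)/√2`. -/
noncomputable def eprState : Fin 2 × Fin 2 → ℂ :=
  fun p => if p.1 = p.2 then (1 : ℂ) / Real.sqrt 2 else 0

/-- The `U`-rotated Bell state `Φ(U)_{ab} = (Uᴴ Z^b X^a ⊗ I) Φ₀₀`. -/
noncomputable def rotatedBell (U : Matrix (Fin 2) (Fin 2) ℂ) (a b : Fin 2) :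
    Fin 2 × Fin 2 → ℂ :=
  ((Uᴴ * pauliZ ^ b.val * pauliX ^ a.val) ⊗ₖ (1 : Matrix (Fin 2) (Fin 2) ℂ)).mulVec
    eprState

/-! The amplitudes of `(M ⊗ 1) Φ₀₀` are `M i j / √2`, so writing `P = Z^b X^a`
(with `Pᴴ = X^a Z^b`) and `E = single j k 1`, the `(i, j, k)` amplitude of the right-hand side
is `(Uᴴ (∑_P P E Pᴴ) U α) i / (2√2)`. The Paulis form an orthogonal basis of the `2 × 2`
matrices, which gives the completeness relation `∑_P P A Pᴴ = 2 tr(A) • 1`; with `Uᴴ U = 1`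
and `tr E = δ_jk` the amplitude becomes `δ_jk α i / √2`. -/

lemma mul_single_mul_apply {m n o p R : Type*} [Fintype n] [Fintype o]
    [DecidableEq n] [DecidableEq o] [NonUnitalNonAssocSemiring R]
    (M : Matrix m n R) (c : R) (N : Matrix o p R) (i : m) (j : n) (k : o) (l : p) :
    (M * single j k c * N) i l = M i j * c * N k l := by
  simp [mul_apply, single_apply, ite_and]

lemma mul_single_one_mul_mulVec_apply {m n o p R : Type*} [Fintype n] [Fintype o] [Fintype p]
    [DecidableEq n] [DecidableEq o] [CommSemiring R]
    (M : Matrix m n R) (N : Matrix o p R) (v : p → R) (i : m) (j : n) (k : o) :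
    ((M * single j k (1 : R) * N) *ᵥ v) i = M i j * (N *ᵥ v) k := by
  simp [mulVec, dotProduct, mul_single_mul_apply, Finset.mul_sum, mul_assoc]

lemma sum_pauli_conj_eq_trace_smul_one (A : Matrix (Fin 2) (Fin 2) ℂ) :
    ∑ a : Fin 2, ∑ b : Fin 2,
        pauliZ ^ b.val * pauliX ^ a.val * A * (pauliX ^ a.val * pauliZ ^ b.val)
      = (2 * A.trace) • (1 : Matrix (Fin 2) (Fin 2) ℂ) := by
  rw [eta_fin_two A]
  simp [Fin.sum_univ_two, pauliX, pauliZ, trace_fin_two, one_fin_two]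
  constructor <;> ring

lemma sum_rotated_pauli_conj_eq_trace_smul (U A : Matrix (Fin 2) (Fin 2) ℂ) :
    ∑ a : Fin 2, ∑ b : Fin 2,
        Uᴴ * pauliZ ^ b.val * pauliX ^ a.val * A * (pauliX ^ a.val * pauliZ ^ b.val * U)
      = (2 * A.trace) • (Uᴴ * U) := by
  have reassoc (P Q : Matrix (Fin 2) (Fin 2) ℂ) :
      Uᴴ * P * Q * A * (Q * P * U) = Uᴴ * (P * Q * A * (Q * P)) * U := by
    simp only [Matrix.mul_assoc]
  simp only [reassoc, ← Finset.mul_sum, ← Finset.sum_mul, sum_pauli_conj_eq_trace_smul_one,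
    Matrix.mul_smul, Matrix.smul_mul, Matrix.mul_one]

lemma sum_rotated_pauli_apply_mul_mulVec_apply (U : Matrix (Fin 2) (Fin 2) ℂ) (hU : Uᴴ * U = 1)
    (α : Fin 2 → ℂ) (i j k : Fin 2) :
    ∑ a : Fin 2, ∑ b : Fin 2,
        (Uᴴ * pauliZ ^ b.val * pauliX ^ a.val) i j *
          ((pauliX ^ a.val * pauliZ ^ b.val * U) *ᵥ α) k
      = 2 * if j = k then α i else 0 := by
  calc _ = ∑ a : Fin 2, ∑ b : Fin 2, ((Uᴴ * pauliZ ^ b.val * pauliX ^ a.val * single j k 1 *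
            (pauliX ^ a.val * pauliZ ^ b.val * U)) *ᵥ α) i := by
        simp only [mul_single_one_mul_mulVec_apply]
    _ = (((2 * (single j k (1 : ℂ)).trace) • (Uᴴ * U)) *ᵥ α) i := by
        simp only [← sum_rotated_pauli_conj_eq_trace_smul, Matrix.sum_mulVec, Finset.sum_apply]
    _ = 2 * if j = k then α i else 0 := by
        rw [hU, smul_mulVec, one_mulVec, Pi.smul_apply, smul_eq_mul]
        rcases eq_or_ne j k with rfl | hjk
        · rw [trace_single_eq_same, if_pos rfl, mul_one]
        · rw [trace_single_eq_of_ne _ _ _ hjk, if_neg hjk, mul_zero, zero_mul]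

lemma kronecker_one_mulVec_eprState_apply (M : Matrix (Fin 2) (Fin 2) ℂ) (i j : Fin 2) :
    ((M ⊗ₖ (1 : Matrix (Fin 2) (Fin 2) ℂ)) *ᵥ eprState) (i, j) = M i j / Real.sqrt 2 := by
  simp [mulVec, dotProduct, Fintype.sum_prod_type, eprState, one_apply, div_eq_mul_inv]

theorem gate_teleportation (U : Matrix (Fin 2) (Fin 2) ℂ) (hU : Uᴴ * U = 1)
    (α : Fin 2 → ℂ) :
    (fun p : Fin 2 × Fin 2 × Fin 2 => α p.1 * eprState p.2)
      = (1 / 2 : ℂ) • ∑ a : Fin 2, ∑ b : Fin 2,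
          (fun p : Fin 2 × Fin 2 × Fin 2 =>
            rotatedBell U a b (p.1, p.2.1) *
              ((pauliX ^ a.val * pauliZ ^ b.val * U).mulVec α) p.2.2) := by
  funext ⟨i, j, k⟩
  have hsum := sum_rotated_pauli_apply_mul_mulVec_apply U hU α i j k
  simp only [Pi.smul_apply, Finset.sum_apply, rotatedBell, kronecker_one_mulVec_eprState_apply,
    div_mul_eq_mul_div, ← Finset.sum_div, hsum, eprState, smul_eq_mul]
  split_ifs <;> ring
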